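/- Feasibility with C² data (Corollary 1): let f : ℝ^{n_x} × ℝ^{n_u} → ℝ^{n_x} be Lipschitz and h : ℝ^{n_x} × ℝ^{n_u} → ℝ^{n_h} be Lipschitz. Let x : [0,1] → ℝ^{n_x} and u : [0,1] → ℝ^{n_u} be such that x′ is twice continuously differentiable and u is twice continuously differentiable, with x′(t) = f(x(t), u(t)) and h(x(t), u(t)) ≤ 0 componentwise for all t ∈ [0,1]. Then there exists C_P > 0, independent of N, such that for every sufficiently large N ∈ ℕ, the Bernstein approximations x_N = B_N x and u_N = B_N u satisfy, at every node t_j = j/N: ‖x_N′(t_j) − f(x_N(t_j), u_N(t_j))‖ ≤ C_P / N and every component of h(x_N(t_j), u_N(t_j)) is ≤ C_P / N; moreover x_N(0) = x(0) and x_N(1) = x(1). -/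

import Mathlib

open scoped BigOperators

/-- The Bernstein basis polynomial `b_{j,N}(t) = C(N,j) t^j (1-t)^(N-j)`. -/
noncomputable def bern (N j : ℕ) (t : ℝ) : ℝ :=
  (N.choose j : ℝ) * t ^ j * (1 - t) ^ (N - j)

/-- The `N`-th Bernstein approximation of `g : [0,1] → E`. -/
noncomputable def bapprox {E : Type*} [AddCommMonoid E] [Module ℝ E]
    (N : ℕ) (g : ℝ → E) (t : ℝ) : E :=
  ∑ j : Fin (N + 1), bern N (j : ℕ) t • g (((j : ℕ) : ℝ) / (N : ℝ))

/-!
The Bernstein basis of degree `N` is a probability distribution on the nodes `j / N` with mean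
`t` and variance `t (1 - t) / N`, so a second-order Taylor expansion gives
`‖B_N g - g‖ ≤ M / N` for `g` with `‖g''‖ ≤ M`. The derivative of `B_{K+1} g` is the
degree-`K` Bernstein combination of the forward differences
`(K + 1) (g ((k + 1) / (K + 1)) - g (k / (K + 1)))`, each of which is `O(1 / K)`-close to
`g' (k / K)`; comparing with `B_K g'` gives
`‖(B_N x)' - x'‖ = O(1 / N)` when `x'` is `C²`. Lipschitz continuity of `f` and `h` transfers these
bounds to the residual of the dynamics and to the constraint violation at the nodes, where
`x' = f (x, u)` and `h (x, u) ≤ 0` hold exactly. The endpoint equalities hold because Bernstein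
approximations interpolate at `0` and `1`.
-/

open Set

lemma bern_eq_eval (N j : ℕ) (t : ℝ) : bern N j t = (bernsteinPolynomial ℝ N j).eval t := by
  simp [bern, bernsteinPolynomial]

lemma bern_nonneg (N j : ℕ) {t : ℝ} (ht : t ∈ Icc (0:ℝ) 1) : 0 ≤ bern N j t := by
  obtain ⟨h₀, h₁⟩ := ht
  have : 0 ≤ 1 - t := sub_nonneg.2 h₁
  unfold bern
  positivity

lemma bern_of_lt {N j : ℕ} (h : N < j) (t : ℝ) : bern N j t = 0 := by
  simp [bern, Nat.choose_eq_zero_of_lt h]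

lemma sum_bern (N : ℕ) (t : ℝ) : ∑ j ∈ Finset.range (N + 1), bern N j t = 1 := by
  simpa [Polynomial.eval_finsetSum, bern_eq_eval] using
    congrArg (Polynomial.eval t) (bernsteinPolynomial.sum ℝ N)

lemma sum_bern_mul_node_sub {N : ℕ} (hN : N ≠ 0) (t : ℝ) :
    ∑ j ∈ Finset.range (N + 1), bern N j t * ((j : ℝ) / N - t) = 0 := by
  have hmean : ∑ j ∈ Finset.range (N + 1), (j : ℝ) * bern N j t = N * t := by
    simpa [Polynomial.eval_finsetSum, bern_eq_eval] using
      congrArg (Polynomial.eval t) (bernsteinPolynomial.sum_smul ℝ N)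
  calc ∑ j ∈ Finset.range (N + 1), bern N j t * ((j : ℝ) / N - t)
      = (∑ j ∈ Finset.range (N + 1), (j : ℝ) * bern N j t) / N
          - (∑ j ∈ Finset.range (N + 1), bern N j t) * t := by
        rw [Finset.sum_div, Finset.sum_mul, ← Finset.sum_sub_distrib]
        exact Finset.sum_congr rfl fun j _ => by ring
    _ = 0 := by rw [hmean, sum_bern]; field_simp; ring

lemma sum_sq_mul_bern {N : ℕ} (hN : N ≠ 0) {t : ℝ} (ht : t ∈ Icc (0:ℝ) 1) :
    ∑ j ∈ Finset.range (N + 1), (t - (j : ℝ) / N) ^ 2 * bern N j t = t * (1 - t) / N := by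
  rw [← Fin.sum_univ_eq_sum_range]
  simpa [bernstein.z, bern, bernstein_apply] using bernstein.variance hN ⟨t, ht⟩

lemma hasDerivAt_bern_zero (N : ℕ) (t : ℝ) :
    HasDerivAt (bern (N + 1) 0) (-((N : ℝ) + 1) * bern N 0 t) t := by
  rw [funext (bern_eq_eval (N + 1) 0)]
  simpa [bernsteinPolynomial.derivative_zero, bern_eq_eval] using
    (bernsteinPolynomial ℝ (N + 1) 0).hasDerivAt t

lemma hasDerivAt_bern_succ (N j : ℕ) (t : ℝ) :
    HasDerivAt (bern (N + 1) (j + 1)) (((N : ℝ) + 1) * (bern N j t - bern N (j + 1) t)) t := by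
  rw [funext (bern_eq_eval (N + 1) (j + 1))]
  simpa [bernsteinPolynomial.derivative_succ, bern_eq_eval] using
    (bernsteinPolynomial ℝ (N + 1) (j + 1)).hasDerivAt t

lemma node_mem {j N : ℕ} (h : j ≤ N) : (j : ℝ) / N ∈ Icc (0:ℝ) 1 :=
  ⟨by positivity, div_le_one_of_le₀ (by exact_mod_cast h) (by positivity)⟩

lemma sum_range_sub_smul_succ_sub {R M : Type*} [Ring R] [AddCommGroup M] [Module R M]
    (e : ℕ → R) (c : ℕ → M) (n : ℕ) :
    ∑ j ∈ Finset.range n, (e j - e (j + 1)) • c (j + 1) - e 0 • c 0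
      = ∑ j ∈ Finset.range n, e j • (c (j + 1) - c j) - e n • c n := by
  induction n with
  | zero => simp
  | succ n ih =>
    rw [Finset.sum_range_succ, Finset.sum_range_succ, ← sub_add_eq_add_sub, ih]
    simp only [sub_smul, smul_sub]
    abel

lemma bapprox_eq_sum_range {E : Type*} [AddCommMonoid E] [Module ℝ E] (N : ℕ) (g : ℝ → E)
    (t : ℝ) : bapprox N g t = ∑ j ∈ Finset.range (N + 1), bern N j t • g ((j : ℝ) / N) :=
  Fin.sum_univ_eq_sum_range (fun j => bern N j t • g ((j : ℝ) / N)) (N + 1)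

lemma bapprox_zero {E : Type*} [AddCommMonoid E] [Module ℝ E] (N : ℕ) (g : ℝ → E) :
    bapprox N g 0 = g 0 := by
  simp [bapprox_eq_sum_range, bern_eq_eval, bernsteinPolynomial.eval_at_0, ite_smul]

lemma bapprox_one {E : Type*} [AddCommMonoid E] [Module ℝ E] {N : ℕ} (hN : N ≠ 0) (g : ℝ → E) :
    bapprox N g 1 = g 1 := by
  simp [bapprox_eq_sum_range, bern_eq_eval, bernsteinPolynomial.eval_at_1, ite_smul, hN]

section DerivativeBounds

variable {E : Type*} [NormedAddCommGroup E] [NormedSpace ℝ E] {s : Set ℝ} {g g₁ g₂ : ℝ → E}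
  {M : ℝ}

lemma Convex.norm_sub_sub_smul_le_of_hasDerivWithinAt (hs : Convex ℝ s)
    (hg : ∀ x ∈ s, HasDerivWithinAt g (g₁ x) s x) (hg₁ : ∀ x ∈ s, HasDerivWithinAt g₁ (g₂ x) s x)
    (hM : ∀ x ∈ s, ‖g₂ x‖ ≤ M) {a b : ℝ} (ha : a ∈ s) (hb : b ∈ s) :
    ‖g b - g a - (b - a) • g₁ a‖ ≤ M * (b - a) ^ 2 := by
  have hM0 : 0 ≤ M := (norm_nonneg _).trans (hM a ha)
  have hab : uIcc a b ⊆ s := hs.ordConnected.uIcc_subset ha hb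
  have hφ : ∀ x ∈ uIcc a b,
      HasDerivWithinAt (fun x => g x - x • g₁ a) (g₁ x - g₁ a) (uIcc a b) x := fun x hx =>
    ((hg x (hab hx)).mono hab).sub (((hasDerivWithinAt_id x _).smul_const (g₁ a)).congr_deriv
      (one_smul _ _))
  have hφ' : ∀ x ∈ uIcc a b, ‖g₁ x - g₁ a‖ ≤ M * |b - a| := fun x hx =>
    calc ‖g₁ x - g₁ a‖ ≤ M * ‖x - a‖ :=
          hs.norm_image_sub_le_of_norm_hasDerivWithin_le hg₁ hM ha (hab hx)
      _ ≤ M * |b - a| := by gcongr; exact abs_sub_left_of_mem_uIcc hx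
  calc ‖g b - g a - (b - a) • g₁ a‖ = ‖(g b - b • g₁ a) - (g a - a • g₁ a)‖ := by
        rw [sub_smul]; congr 1; abel
    _ ≤ M * |b - a| * ‖b - a‖ := (convex_uIcc a b).norm_image_sub_le_of_norm_hasDerivWithin_le
        hφ hφ' left_mem_uIcc right_mem_uIcc
    _ = M * (b - a) ^ 2 := by rw [Real.norm_eq_abs, mul_assoc, ← sq, sq_abs]

lemma Convex.norm_slope_sub_le_of_hasDerivWithinAt (hs : Convex ℝ s)
    (hg : ∀ x ∈ s, HasDerivWithinAt g (g₁ x) s x) (hg₁ : ∀ x ∈ s, HasDerivWithinAt g₁ (g₂ x) s x)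
    (hM : ∀ x ∈ s, ‖g₂ x‖ ≤ M) {a b : ℝ} (ha : a ∈ s) (hb : b ∈ s) (hab : a ≠ b) :
    ‖slope g a b - g₁ a‖ ≤ M * |b - a| := by
  have hba : b - a ≠ 0 := sub_ne_zero.2 hab.symm
  have hslope : slope g a b - g₁ a = (b - a)⁻¹ • (g b - g a - (b - a) • g₁ a) := by
    simp only [slope_def_module, smul_sub, smul_smul, inv_mul_cancel₀ hba, one_smul]
  rw [hslope, norm_smul, norm_inv, Real.norm_eq_abs, inv_mul_le_iff₀ (abs_pos.2 hba)]
  calc ‖g b - g a - (b - a) • g₁ a‖ ≤ M * (b - a) ^ 2 :=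
        hs.norm_sub_sub_smul_le_of_hasDerivWithinAt hg hg₁ hM ha hb
    _ = |b - a| * (M * |b - a|) := by rw [← sq_abs]; ring

lemma ContDiffOn.exists_hasDerivWithinAt_bounded {a b : ℝ} (hab : a < b)
    (hg : ContDiffOn ℝ 2 g (Icc a b)) :
    ∃ g₁ g₂ : ℝ → E, ∃ C, 0 < C ∧
      (∀ x ∈ Icc a b, HasDerivWithinAt g (g₁ x) (Icc a b) x) ∧
      (∀ x ∈ Icc a b, HasDerivWithinAt g₁ (g₂ x) (Icc a b) x) ∧
      ∀ x ∈ Icc a b, ‖g₁ x‖ ≤ C ∧ ‖g₂ x‖ ≤ C := by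
  have hu := uniqueDiffOn_Icc hab
  have hg₁ : ContDiffOn ℝ 1 (derivWithin g (Icc a b)) (Icc a b) :=
    hg.derivWithin hu (by norm_num)
  obtain ⟨M₁, hM₁⟩ := isCompact_Icc.exists_bound_of_continuousOn hg₁.continuousOn
  obtain ⟨M₂, hM₂⟩ := isCompact_Icc.exists_bound_of_continuousOn
    (hg₁.continuousOn_derivWithin hu le_rfl)
  refine ⟨_, _, max (max M₁ M₂) 1, lt_max_of_lt_right one_pos,
    fun x hx => (hg.differentiableOn two_ne_zero x hx).hasDerivWithinAt,
    fun x hx => (hg₁.differentiableOn one_ne_zero x hx).hasDerivWithinAt,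
    fun x hx => ⟨?_, ?_⟩⟩
  · exact (hM₁ x hx).trans ((le_max_left _ _).trans (le_max_left _ _))
  · exact (hM₂ x hx).trans ((le_max_right _ _).trans (le_max_left _ _))

end DerivativeBounds

section BernsteinApproximation

variable {E : Type*} [NormedAddCommGroup E] [NormedSpace ℝ E]

lemma hasDerivAt_sum_bern_smul (c : ℕ → E) (N : ℕ) (t : ℝ) :
    HasDerivAt (fun s => ∑ j ∈ Finset.range (N + 2), bern (N + 1) j s • c j)
      (((N : ℝ) + 1) • ∑ k ∈ Finset.range (N + 1), bern N k t • (c (k + 1) - c k)) t := by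
  simp_rw [Finset.sum_range_succ' _ (N + 1)]
  convert (HasDerivAt.fun_sum (u := Finset.range (N + 1))
    fun j _ => (hasDerivAt_bern_succ N j t).smul_const (c (j + 1))).fun_add
    ((hasDerivAt_bern_zero N t).smul_const (c 0)) using 1
  rw [neg_mul, neg_smul, ← sub_eq_add_neg]
  simp only [mul_smul, ← Finset.smul_sum, ← smul_sub]
  rw [sum_range_sub_smul_succ_sub, bern_of_lt (Nat.lt_succ_self N), zero_smul, sub_zero]

lemma hasDerivAt_bapprox_succ (g : ℝ → E) (N : ℕ) (t : ℝ) :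
    HasDerivAt (bapprox (N + 1) g)
      (((N : ℝ) + 1) • ∑ k ∈ Finset.range (N + 1),
        bern N k t • (g (((k : ℝ) + 1) / (N + 1)) - g ((k : ℝ) / (N + 1)))) t := by
  have := hasDerivAt_sum_bern_smul (fun j => g ((j : ℝ) / (N + 1))) N t
  push_cast at this
  convert this using 1
  funext s
  rw [bapprox_eq_sum_range]
  push_cast
  rfl

lemma norm_sum_bern_smul_le {N : ℕ} {t : ℝ} (ht : t ∈ Icc (0:ℝ) 1) {w : ℕ → E} {C : ℝ}
    (hw : ∀ k ≤ N, ‖w k‖ ≤ C) : ‖∑ k ∈ Finset.range (N + 1), bern N k t • w k‖ ≤ C :=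
  calc ‖∑ k ∈ Finset.range (N + 1), bern N k t • w k‖
      ≤ ∑ k ∈ Finset.range (N + 1), bern N k t * C := by
        refine norm_sum_le_of_le _ fun k hk => ?_
        rw [norm_smul, Real.norm_of_nonneg (bern_nonneg N k ht)]
        gcongr
        · exact bern_nonneg N k ht
        · exact hw k (Nat.lt_succ_iff.1 (Finset.mem_range.1 hk))
    _ = C := by rw [← Finset.sum_mul, sum_bern, one_mul]

variable {g g₁ g₂ g₃ : ℝ → E} {M : ℝ}

lemma norm_bapprox_sub_le (hg : ∀ s ∈ Icc (0:ℝ) 1, HasDerivWithinAt g (g₁ s) (Icc 0 1) s)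
    (hg₁ : ∀ s ∈ Icc (0:ℝ) 1, HasDerivWithinAt g₁ (g₂ s) (Icc 0 1) s)
    (hM : ∀ s ∈ Icc (0:ℝ) 1, ‖g₂ s‖ ≤ M) {N : ℕ} (hN : N ≠ 0) {t : ℝ}
    (ht : t ∈ Icc (0:ℝ) 1) : ‖bapprox N g t - g t‖ ≤ M / N := by
  have hM0 : 0 ≤ M := (norm_nonneg _).trans (hM t ht)
  set R : ℕ → E := fun j => g ((j : ℝ) / N) - g t - ((j : ℝ) / N - t) • g₁ t
  have hR : bapprox N g t - g t = ∑ j ∈ Finset.range (N + 1), bern N j t • R j := by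
    simp only [R, smul_sub, smul_smul, Finset.sum_sub_distrib, ← Finset.sum_smul,
      sum_bern_mul_node_sub hN, sum_bern, zero_smul, one_smul, sub_zero, bapprox_eq_sum_range]
  have hRj : ∀ j ∈ Finset.range (N + 1),
      ‖bern N j t • R j‖ ≤ M * ((t - j / N) ^ 2 * bern N j t) := by
    intro j hj
    rw [norm_smul, Real.norm_of_nonneg (bern_nonneg N j ht)]
    have := (convex_Icc (0:ℝ) 1).norm_sub_sub_smul_le_of_hasDerivWithinAt hg hg₁ hM ht
      (node_mem (Nat.lt_succ_iff.1 (Finset.mem_range.1 hj)))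
    calc bern N j t * ‖R j‖ ≤ bern N j t * (M * ((j : ℝ) / N - t) ^ 2) := by
          gcongr; exact bern_nonneg N j ht
      _ = M * ((t - j / N) ^ 2 * bern N j t) := by ring
  calc ‖bapprox N g t - g t‖
        ≤ M * ∑ j ∈ Finset.range (N + 1), (t - j / N) ^ 2 * bern N j t := by
        rw [hR, Finset.mul_sum]; exact norm_sum_le_of_le _ hRj
    _ = M * (t * (1 - t)) / N := by rw [sum_sq_mul_bern hN ht]; ring
    _ ≤ M / N := by
        gcongr
        exact mul_le_of_le_one_right hM0 (by nlinarith [ht.1, ht.2])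

lemma norm_succ_smul_sub_sub_le (hg : ∀ s ∈ Icc (0:ℝ) 1, HasDerivWithinAt g (g₁ s) (Icc 0 1) s)
    (hg₁ : ∀ s ∈ Icc (0:ℝ) 1, HasDerivWithinAt g₁ (g₂ s) (Icc 0 1) s)
    (hM : ∀ s ∈ Icc (0:ℝ) 1, ‖g₂ s‖ ≤ M) {K k : ℕ} (hK : K ≠ 0) (hk : k ≤ K) :
    ‖((K : ℝ) + 1) • (g (((k : ℝ) + 1) / (K + 1)) - g ((k : ℝ) / (K + 1))) - g₁ ((k : ℝ) / K)‖
      ≤ 2 * M / (K + 1) := by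
  have hM0 : 0 ≤ M := (norm_nonneg _).trans (hM 0 (left_mem_Icc.2 zero_le_one))
  have hK0 : (0 : ℝ) < K := by positivity
  set a : ℝ := k / (K + 1)
  set b : ℝ := ((k : ℝ) + 1) / (K + 1)
  have ha : a ∈ Icc (0:ℝ) 1 := by simpa [a] using node_mem (Nat.le_succ_of_le hk)
  have hb : b ∈ Icc (0:ℝ) 1 := by simpa [b] using node_mem (Nat.succ_le_succ hk)
  have hba : b - a = 1 / (K + 1) := by simp only [a, b]; field_simp; ring
  have hslope : slope g a b = ((K : ℝ) + 1) • (g b - g a) := by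
    rw [slope_def_module, hba, one_div, inv_inv]
  have hstep : ‖slope g a b - g₁ a‖ ≤ M / (K + 1) := by
    have := (convex_Icc (0:ℝ) 1).norm_slope_sub_le_of_hasDerivWithinAt hg hg₁ hM ha hb
      (by linarith [hba, show (0:ℝ) < 1 / (K + 1) by positivity])
    rwa [hba, abs_of_pos (by positivity), mul_one_div] at this
  have hnode : ‖g₁ a - g₁ (k / K)‖ ≤ M / (K + 1) := by
    have hak : |a - k / K| ≤ 1 / (K + 1) := by
      have hkK : (k : ℝ) ≤ K := by exact_mod_cast hk
      have hak_nonneg : 0 ≤ k / K - a :=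
        sub_nonneg.2 (div_le_div_of_nonneg_left k.cast_nonneg hK0 (by linarith))
      rw [abs_sub_comm, abs_of_nonneg hak_nonneg, div_sub_div _ _ hK0.ne' (by positivity),
        div_le_div_iff₀ (by positivity) (by positivity)]
      nlinarith
    calc ‖g₁ a - g₁ (k / K)‖ ≤ M * ‖a - k / K‖ :=
          (convex_Icc (0:ℝ) 1).norm_image_sub_le_of_norm_hasDerivWithin_le hg₁ hM (node_mem hk) ha
      _ ≤ M * (1 / (K + 1)) := mul_le_mul_of_nonneg_left (by rwa [Real.norm_eq_abs]) hM0
      _ = M / (K + 1) := mul_one_div _ _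
  calc _ = ‖(slope g a b - g₁ a) + (g₁ a - g₁ (k / K))‖ := by rw [hslope]; abel_nf
    _ ≤ M / (K + 1) + M / (K + 1) := (norm_add_le _ _).trans (add_le_add hstep hnode)
    _ = 2 * M / (K + 1) := by ring

lemma norm_deriv_bapprox_sub_le (hg : ∀ s ∈ Icc (0:ℝ) 1, HasDerivWithinAt g (g₁ s) (Icc 0 1) s)
    (hg₁ : ∀ s ∈ Icc (0:ℝ) 1, HasDerivWithinAt g₁ (g₂ s) (Icc 0 1) s)
    (hg₂ : ∀ s ∈ Icc (0:ℝ) 1, HasDerivWithinAt g₂ (g₃ s) (Icc 0 1) s)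
    (hM₂ : ∀ s ∈ Icc (0:ℝ) 1, ‖g₂ s‖ ≤ M) (hM₃ : ∀ s ∈ Icc (0:ℝ) 1, ‖g₃ s‖ ≤ M)
    {N : ℕ} (hN : 2 ≤ N) {t : ℝ} (ht : t ∈ Icc (0:ℝ) 1) :
    ‖deriv (bapprox N g) t - g₁ t‖ ≤ 4 * M / N := by
  obtain ⟨K, rfl⟩ : ∃ K, N = K + 1 := ⟨N - 1, by omega⟩
  have hK : K ≠ 0 := by omega
  have hM0 : 0 ≤ M := (norm_nonneg _).trans (hM₂ t ht)
  set w : ℕ → E := fun k =>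
    ((K : ℝ) + 1) • (g (((k : ℝ) + 1) / (K + 1)) - g ((k : ℝ) / (K + 1))) - g₁ ((k : ℝ) / K)
  have hsplit : deriv (bapprox (K + 1) g) t - g₁ t
      = ∑ k ∈ Finset.range (K + 1), bern K k t • w k + (bapprox K g₁ t - g₁ t) := by
    rw [(hasDerivAt_bapprox_succ g K t).deriv, bapprox_eq_sum_range, Finset.smul_sum,
      add_sub_assoc', ← Finset.sum_add_distrib]
    congr 1
    refine Finset.sum_congr rfl fun k _ => ?_
    simp only [w, smul_sub, smul_comm ((K : ℝ) + 1) (bern K k t)]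
    abel
  have hKK : (K : ℝ) + 1 ≤ 2 * K := by
    have : (1 : ℝ) ≤ K := by exact_mod_cast Nat.one_le_iff_ne_zero.2 hK
    linarith
  rw [hsplit, Nat.cast_succ]
  calc _ ≤ 2 * M / (K + 1) + M / K := (norm_add_le _ _).trans (add_le_add
        (norm_sum_bern_smul_le ht fun k hk => norm_succ_smul_sub_sub_le hg hg₁ hM₂ hK hk)
        (norm_bapprox_sub_le hg₁ hg₂ hM₃ hK ht))
    _ ≤ 2 * M / (K + 1) + 2 * M / (K + 1) := by
        gcongr 2 * M / (K + 1) + ?_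
        rw [div_le_div_iff₀ (by positivity) (by positivity)]
        nlinarith
    _ = 4 * M / (K + 1) := by ring

end BernsteinApproximation

lemma LipschitzWith.apply_le_of_apply_nonpos {α ι : Type*} [SeminormedAddCommGroup α]
    [Fintype ι] {L : NNReal} {h : α → EuclideanSpace ℝ ι} (hh : LipschitzWith L h) {p q : α}
    (hq : ∀ i, h q i ≤ 0) (i : ι) : h p i ≤ L * ‖p - q‖ :=
  calc h p i ≤ h p i - h q i := by linarith [hq i]
    _ ≤ ‖h p - h q‖ := (le_abs_self _).trans (by simpa using PiLp.norm_apply_le (h p - h q) i)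
    _ ≤ L * ‖p - q‖ := hh.norm_sub_le p q

/-- Corollary 1, Feasibility with C² data: if `x'` and `u` are twice
continuously differentiable, the Bernstein approximations satisfy the relaxed
constraints at all nodes with relaxation bound `C_P / N`, and match the boundary
values of `x`. -/
theorem bernstein_discretization_feasibility_C2 (nx nu nh : ℕ)
    (f : EuclideanSpace ℝ (Fin nx) × EuclideanSpace ℝ (Fin nu) → EuclideanSpace ℝ (Fin nx))
    (h : EuclideanSpace ℝ (Fin nx) × EuclideanSpace ℝ (Fin nu) → EuclideanSpace ℝ (Fin nh))
    (Lf Lh : NNReal) (hf : LipschitzWith Lf f) (hh : LipschitzWith Lh h)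
    (x x' : ℝ → EuclideanSpace ℝ (Fin nx)) (u : ℝ → EuclideanSpace ℝ (Fin nu))
    (hxd : ∀ t ∈ Set.Icc (0:ℝ) 1, HasDerivWithinAt x (x' t) (Set.Icc (0:ℝ) 1) t)
    (hx' : ContDiffOn ℝ 2 x' (Set.Icc (0:ℝ) 1))
    (hu : ContDiffOn ℝ 2 u (Set.Icc (0:ℝ) 1))
    (hdyn : ∀ t ∈ Set.Icc (0:ℝ) 1, x' t = f (x t, u t))
    (hineq : ∀ t ∈ Set.Icc (0:ℝ) 1, ∀ i, h (x t, u t) i ≤ 0) :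
    ∃ CP : ℝ, 0 < CP ∧ ∃ N₀ : ℕ, ∀ N : ℕ, N₀ ≤ N → ∀ j : ℕ, j ≤ N →
      ‖deriv (bapprox N x) ((j : ℝ) / (N : ℝ))
          - f (bapprox N x ((j : ℝ) / (N : ℝ)), bapprox N u ((j : ℝ) / (N : ℝ)))‖
        ≤ CP / (N : ℝ) ∧
      (∀ i, h (bapprox N x ((j : ℝ) / (N : ℝ)), bapprox N u ((j : ℝ) / (N : ℝ))) i
        ≤ CP / (N : ℝ)) ∧
      bapprox N x 0 = x 0 ∧ bapprox N x 1 = x 1 := by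
  obtain ⟨x₂, x₃, Mx, hMx, hx'₂, hx₂₃, hMx'⟩ := hx'.exists_hasDerivWithinAt_bounded one_pos
  obtain ⟨u₁, u₂, Mu, hMu, hu₁, hu₁₂, hMu'⟩ := hu.exists_hasDerivWithinAt_bounded one_pos
  set C := max Mx Mu
  refine ⟨(4 + Lf + Lh) * C, by positivity, 2, fun N hN j hj => ?_⟩
  have hN0 : N ≠ 0 := by omega
  set t : ℝ := j / N
  have ht : t ∈ Set.Icc (0:ℝ) 1 := node_mem hj
  have hD : ‖deriv (bapprox N x) t - x' t‖ ≤ 4 * C / N :=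
    (norm_deriv_bapprox_sub_le hxd hx'₂ hx₂₃ (fun s hs => (hMx' s hs).1) (fun s hs => (hMx' s hs).2)
      hN ht).trans (by gcongr; exact le_max_left _ _)
  have hX : ‖bapprox N x t - x t‖ ≤ C / N :=
    (norm_bapprox_sub_le hxd hx'₂ (fun s hs => (hMx' s hs).1) hN0 ht).trans
      (by gcongr; exact le_max_left _ _)
  have hU : ‖bapprox N u t - u t‖ ≤ C / N :=
    (norm_bapprox_sub_le hu₁ hu₁₂ (fun s hs => (hMu' s hs).2) hN0 ht).trans
      (by gcongr; exact le_max_right _ _)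
  have hPQ : ‖(bapprox N x t, bapprox N u t) - (x t, u t)‖ ≤ C / N := max_le hX hU
  have hCP : (4 + Lf + Lh : ℝ) * C / N = 4 * C / N + Lf * (C / N) + Lh * (C / N) := by ring
  have h4 : 0 ≤ 4 * C / N := by positivity
  have hLf : 0 ≤ (Lf : ℝ) * (C / N) := by positivity
  have hLh : 0 ≤ (Lh : ℝ) * (C / N) := by positivity
  refine ⟨?_, fun i => ?_, bapprox_zero N x, bapprox_one hN0 x⟩
  · have hf' : ‖f (x t, u t) - f (bapprox N x t, bapprox N u t)‖ ≤ Lf * (C / N) := by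
      rw [norm_sub_rev]; exact (hf.norm_sub_le _ _).trans (by gcongr)
    rw [hdyn t ht] at hD
    linarith [norm_sub_le_norm_sub_add_norm_sub (deriv (bapprox N x) t) (f (x t, u t))
      (f (bapprox N x t, bapprox N u t))]
  · have hh' := (hh.apply_le_of_apply_nonpos (hineq t ht) i).trans
      (by gcongr : _ ≤ (Lh : ℝ) * (C / N))
    linarith
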